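/- Let H be a complex Hilbert space, let a ∈ ℂ, let B : H → ℂ be a bounded linear functional, let C : ℂ → H be a bounded operator, and let D : H → H be a bounded operator with 1 − D invertible. Define the scalar φ = a + B((1 − D)⁻¹(C(1))) and assume φ ≠ 1. Let U = [a, B; C, D] be the block operator on ℂ ⊕ H (so 1 − U is invertible), and let T = i(1 + U)(1 − U)⁻¹ with block decomposition T = [T₁₁, T₁₂; T₂₁, T₂₂] on ℂ ⊕ H. Then: (i) T₁₁ = i(1 + φ)/(1 − φ) (as a scalar); (ii) T₂₁ = (2i/(1 − φ))·(1 − D)⁻¹C; (iii) T₁₂ = (2i/(1 − φ))·B(1 − D)⁻¹; (iv) T₂₂ = i(1 + D)(1 − D)⁻¹ + (2i/(1 − φ))·(1 − D)⁻¹CB(1 − D)⁻¹. -/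

import Mathlib

/-!
The Schur complement of the corner `1 - D` in `1 - U` is the scalar `1 - φ`, which inverts `1 - U`
blockwise. Since `1 + U = 2 - (1 - U)`, the Cayley transform is `T = i (2 (1 - U)⁻¹ - 1)`, so its
blocks are read off from those of `(1 - U)⁻¹`; for `T₂₂` one uses `(1 + D)(1 - D)⁻¹ = 2 (1 - D)⁻¹ - 1`
in the same way.
-/

open ContinuousLinearMap

variable {H : Type*} [NormedAddCommGroup H] [InnerProductSpace ℂ H] [CompleteSpace H]

/-- The block operator `[A, B; C, D]` on `ℂ ⊕ H`, sending `(x, y)` to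
`(A x + B y, C x + D y)`. -/
noncomputable def blockOp (A : ℂ →L[ℂ] ℂ) (B : H →L[ℂ] ℂ)
    (C : ℂ →L[ℂ] H) (D : H →L[ℂ] H) : (ℂ × H) →L[ℂ] (ℂ × H) :=
  (A.comp (ContinuousLinearMap.fst ℂ ℂ H) + B.comp (ContinuousLinearMap.snd ℂ ℂ H)).prod
    (C.comp (ContinuousLinearMap.fst ℂ ℂ H) + D.comp (ContinuousLinearMap.snd ℂ ℂ H))

theorem one_add_mul_eq_two_mul_sub_one {R : Type*} [Ring R] {u r : R} (h : (1 - u) * r = 1) :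
    (1 + u) * r = 2 * r - 1 := by
  rw [show 1 + u = 2 - (1 - u) by rw [← one_add_one_eq_two]; abel, sub_mul, h]

section blockOp

variable {H : Type*} [NormedAddCommGroup H] [InnerProductSpace ℂ H]
variable {A A' : ℂ →L[ℂ] ℂ} {B B' : H →L[ℂ] ℂ} {C C' : ℂ →L[ℂ] H} {D D' : H →L[ℂ] H}

@[simp]
theorem blockOp_apply (x : ℂ) (y : H) : blockOp A B C D (x, y) = (A x + B y, C x + D y) := rfl

@[simp]
theorem fst_comp_blockOp_comp_inl : fst ℂ ℂ H ∘L blockOp A B C D ∘L inl ℂ ℂ H = A := by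
  ext; simp

@[simp]
theorem fst_comp_blockOp_comp_inr : fst ℂ ℂ H ∘L blockOp A B C D ∘L inr ℂ ℂ H = B := by
  ext; simp

@[simp]
theorem snd_comp_blockOp_comp_inl : snd ℂ ℂ H ∘L blockOp A B C D ∘L inl ℂ ℂ H = C := by
  ext; simp

@[simp]
theorem snd_comp_blockOp_comp_inr : snd ℂ ℂ H ∘L blockOp A B C D ∘L inr ℂ ℂ H = D := by
  ext; simp

theorem blockOp_one : blockOp (1 : ℂ →L[ℂ] ℂ) (0 : H →L[ℂ] ℂ) 0 1 = 1 := by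
  ext <;> simp

theorem blockOp_add :
    blockOp A B C D + blockOp A' B' C' D' = blockOp (A + A') (B + B') (C + C') (D + D') := by
  ext <;> simp

theorem blockOp_sub :
    blockOp A B C D - blockOp A' B' C' D' = blockOp (A - A') (B - B') (C - C') (D - D') := by
  ext <;> simp

theorem one_sub_blockOp : 1 - blockOp A B C D = blockOp (1 - A) (-B) (-C) (1 - D) := by
  rw [← blockOp_one, blockOp_sub, zero_sub, zero_sub]

theorem blockOp_smul (c : ℂ) :
    c • blockOp A B C D = blockOp (c • A) (c • B) (c • C) (c • D) := by
  ext <;> simp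

theorem blockOp_mul_blockOp :
    blockOp A B C D * blockOp A' B' C' D' =
      blockOp (A ∘L A' + B ∘L C') (A ∘L B' + B ∘L D') (C ∘L A' + D ∘L C') (C ∘L B' + D ∘L D') := by
  ext <;> simp

/-- For `E = D⁻¹` and `s • 1 = A - B D⁻¹ C` the Schur complement of `D`, this is the inverse of
`blockOp A B C D`. -/
noncomputable def schurBlockInv (B : H →L[ℂ] ℂ) (C : ℂ →L[ℂ] H) (E : H →L[ℂ] H) (s : ℂ) :
    (ℂ × H) →L[ℂ] (ℂ × H) :=
  blockOp (s⁻¹ • 1) (-s⁻¹ • B ∘L E) (-s⁻¹ • E ∘L C) (E + s⁻¹ • E ∘L C ∘L B ∘L E)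

variable {s : ℂ}

theorem blockOp_mul_schurBlockInv (hD : IsUnit D) (hs : s ≠ 0)
    (hschur : A - B ∘L Ring.inverse D ∘L C = s • 1) :
    blockOp A B C D * schurBlockInv B C (Ring.inverse D) s = 1 := by
  have hDE : D ∘L Ring.inverse D = .id ℂ H := Ring.mul_inverse_cancel D hD
  obtain rfl : A = s • 1 + B ∘L Ring.inverse D ∘L C := by rw [← hschur]; abel
  rw [schurBlockInv, blockOp_mul_blockOp, ← blockOp_one]
  congr 1
  all_goals simp only [add_comp, comp_add, smul_comp, comp_smul, comp_neg, ← comp_assoc, hDE,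
    one_def, id_comp, comp_id, neg_smul]
  all_goals match_scalars <;> field_simp <;> ring

theorem schurBlockInv_mul_blockOp (hD : IsUnit D) (hs : s ≠ 0)
    (hschur : A - B ∘L Ring.inverse D ∘L C = s • 1) :
    schurBlockInv B C (Ring.inverse D) s * blockOp A B C D = 1 := by
  have hED : Ring.inverse D ∘L D = .id ℂ H := Ring.inverse_mul_cancel D hD
  obtain rfl : A = s • 1 + B ∘L Ring.inverse D ∘L C := by rw [← hschur]; abel
  rw [schurBlockInv, blockOp_mul_blockOp, ← blockOp_one]
  congr 1
  all_goals simp only [add_comp, comp_add, smul_comp, comp_smul, neg_comp, comp_assoc, hED,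
    one_def, id_comp, comp_id, neg_smul, smul_neg]
  all_goals match_scalars <;> field_simp <;> ring

theorem inverse_blockOp (hD : IsUnit D) (hs : s ≠ 0)
    (hschur : A - B ∘L Ring.inverse D ∘L C = s • 1) :
    Ring.inverse (blockOp A B C D) = schurBlockInv B C (Ring.inverse D) s :=
  Ring.inverse_unit
    ⟨_, _, blockOp_mul_schurBlockInv hD hs hschur, schurBlockInv_mul_blockOp hD hs hschur⟩

end blockOp

theorem concrete_cayley_blocks
    (a : ℂ) (B : H →L[ℂ] ℂ) (C : ℂ →L[ℂ] H) (D : H →L[ℂ] H)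
    (hD : IsUnit (1 - D))
    (φ : ℂ) (hφdef : φ = a + B ((Ring.inverse (1 - D)) (C 1)))
    (hφ : φ ≠ 1)
    (U : (ℂ × H) →L[ℂ] (ℂ × H))
    (hUdef : U = blockOp (a • (1 : ℂ →L[ℂ] ℂ)) B C D)
    (T : (ℂ × H) →L[ℂ] (ℂ × H))
    (hTdef : T = Complex.I • ((1 + U) * Ring.inverse (1 - U)))
    (T₁₁ : ℂ →L[ℂ] ℂ)
    (hT₁₁ : T₁₁ = (ContinuousLinearMap.fst ℂ ℂ H) ∘L T ∘L (ContinuousLinearMap.inl ℂ ℂ H))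
    (T₁₂ : H →L[ℂ] ℂ)
    (hT₁₂ : T₁₂ = (ContinuousLinearMap.fst ℂ ℂ H) ∘L T ∘L (ContinuousLinearMap.inr ℂ ℂ H))
    (T₂₁ : ℂ →L[ℂ] H)
    (hT₂₁ : T₂₁ = (ContinuousLinearMap.snd ℂ ℂ H) ∘L T ∘L (ContinuousLinearMap.inl ℂ ℂ H))
    (T₂₂ : H →L[ℂ] H)
    (hT₂₂ : T₂₂ = (ContinuousLinearMap.snd ℂ ℂ H) ∘L T ∘L (ContinuousLinearMap.inr ℂ ℂ H)) :
    T₁₁ = (Complex.I * (1 + φ) / (1 - φ)) • (1 : ℂ →L[ℂ] ℂ) ∧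
      T₂₁ = (2 * Complex.I / (1 - φ)) • ((Ring.inverse (1 - D)) ∘L C) ∧
      T₁₂ = (2 * Complex.I / (1 - φ)) • (B ∘L (Ring.inverse (1 - D))) ∧
      T₂₂ = Complex.I • ((1 + D) * Ring.inverse (1 - D)) +
        (2 * Complex.I / (1 - φ)) •
          ((Ring.inverse (1 - D)) ∘L C ∘L B ∘L (Ring.inverse (1 - D))) := by
  set E := Ring.inverse (1 - D)
  have hs : 1 - φ ≠ 0 := sub_ne_zero.2 hφ.symm
  have hschur : 1 - a • 1 - (-B) ∘L E ∘L (-C) = (1 - φ) • (1 : ℂ →L[ℂ] ℂ) := by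
    ext
    simp [hφdef, sub_sub]
  have hOneSubU : 1 - U = blockOp (1 - a • 1) (-B) (-C) (1 - D) := hUdef ▸ one_sub_blockOp
  have hT : T = Complex.I • (2 * schurBlockInv (-B) (-C) E (1 - φ) - 1) := by
    rw [hTdef, hOneSubU, inverse_blockOp hD hs hschur,
      one_add_mul_eq_two_mul_sub_one (hOneSubU ▸ blockOp_mul_schurBlockInv hD hs hschur)]
  have hDE : (1 + D) * E = 2 * E - 1 :=
    one_add_mul_eq_two_mul_sub_one (Ring.mul_inverse_cancel _ hD)
  rw [hT₁₁, hT₁₂, hT₂₁, hT₂₂, hT, two_mul, schurBlockInv, ← blockOp_one, blockOp_add,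
    blockOp_sub, blockOp_smul]
  simp only [fst_comp_blockOp_comp_inl, fst_comp_blockOp_comp_inr, snd_comp_blockOp_comp_inl,
    snd_comp_blockOp_comp_inr, hDE, two_mul, neg_comp, comp_neg, neg_neg]
  refine ⟨?_, ?_, ?_, ?_⟩
  · match_scalars
    field_simp
    ring
  all_goals module
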